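/- arXiv:1908.10388 — 6 statements merged into one kernel-verified Lean document; each statement's English description precedes it below -/
import Mathlib

section
/- Define P_j = (N-j)·(1/(B-j))·(1 - 1/(B-j))^{N-j-1} for integers 0 ≤ j ≤ min{B,N} - 1 with N, B positive integers. If B ≥ N + √N or B ≤ N - √N, then P_j ≥ P_{j+1} for all 0 ≤ j ≤ min{B,N} - 2. -/
private lemma bern_aux (n : ℕ) (X : ℝ) (hX : 0 ≤ X) :
    X ^ (n + 1) + (n + 1 : ℝ) * X ^ n ≤ (X + 1) ^ (n + 1) := by
  induction n with
  | zero => norm_num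
  | succ n ih =>
    have h3 : 0 ≤ X ^ n := pow_nonneg hX n
    have h2 : (X ^ (n + 1) + ((n : ℝ) + 1) * X ^ n) * (X + 1) ≤ (X + 1) ^ (n + 1) * (X + 1) :=
      mul_le_mul_of_nonneg_right ih (by linarith)
    have e : (X + 1) ^ (n + 1 + 1) = (X + 1) ^ (n + 1) * (X + 1) := pow_succ _ _
    rw [e]
    push_cast
    nlinarith [h2, pow_succ X n, pow_succ X (n + 1)]

private lemma core_aux (m : ℕ) (b : ℝ) (hb : 2 ≤ b)
    (hd : ((m : ℝ) + 2) ≤ (b - ((m : ℝ) + 2)) ^ 2) :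
    ((m : ℝ) + 1) * b ^ 2 * (b * (b - 2)) ^ m ≤ ((m : ℝ) + 2) * ((b - 1) ^ 2) ^ (m + 1) := by
  have hX : 0 ≤ b * (b - 2) := mul_nonneg (by linarith) (by linarith)
  have hY : 0 ≤ (b * (b - 2)) ^ m := pow_nonneg hX m
  have hbern := bern_aux m (b * (b - 2)) hX
  have hbr : ((m : ℝ) + 1) * b ^ 2 ≤ ((m : ℝ) + 2) * (b * (b - 2)) + ((m : ℝ) + 2) * ((m : ℝ) + 1) := by
    nlinarith [hd]
  have step1 : ((m : ℝ) + 1) * b ^ 2 * (b * (b - 2)) ^ m ≤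
      (((m : ℝ) + 2) * (b * (b - 2)) + ((m : ℝ) + 2) * ((m : ℝ) + 1)) * (b * (b - 2)) ^ m :=
    mul_le_mul_of_nonneg_right hbr hY
  have step2 : (((m : ℝ) + 2) * (b * (b - 2)) + ((m : ℝ) + 2) * ((m : ℝ) + 1)) * (b * (b - 2)) ^ m
      = ((m : ℝ) + 2) * ((b * (b - 2)) ^ (m + 1) + ((m : ℝ) + 1) * (b * (b - 2)) ^ m) := by
    rw [pow_succ]; ring
  have step3 : ((m : ℝ) + 2) * ((b * (b - 2)) ^ (m + 1) + ((m : ℝ) + 1) * (b * (b - 2)) ^ m)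
      ≤ ((m : ℝ) + 2) * ((b * (b - 2)) + 1) ^ (m + 1) :=
    mul_le_mul_of_nonneg_left hbern (by positivity)
  have step4 : ((b * (b - 2)) + 1 : ℝ) ^ (m + 1) = ((b - 1) ^ 2) ^ (m + 1) := by
    congr 1; ring
  calc ((m : ℝ) + 1) * b ^ 2 * (b * (b - 2)) ^ m
      ≤ (((m : ℝ) + 2) * (b * (b - 2)) + ((m : ℝ) + 2) * ((m : ℝ) + 1)) * (b * (b - 2)) ^ m := step1
    _ = ((m : ℝ) + 2) * ((b * (b - 2)) ^ (m + 1) + ((m : ℝ) + 1) * (b * (b - 2)) ^ m) := step2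
    _ ≤ ((m : ℝ) + 2) * ((b * (b - 2)) + 1) ^ (m + 1) := step3
    _ = ((m : ℝ) + 2) * ((b - 1) ^ 2) ^ (m + 1) := by rw [step4]

private lemma reduce_aux (m : ℕ) (b : ℝ) (hb : 2 ≤ b)
    (hd : ((m : ℝ) + 2) ≤ (b - ((m : ℝ) + 2)) ^ 2) :
    ((m : ℝ) + 1) * (1 / (b - 1)) * ((b - 2) / (b - 1)) ^ m ≤
      ((m : ℝ) + 2) * (1 / b) * ((b - 1) / b) ^ (m + 1) := by
  have key := core_aux m b hb hd
  have hbpos : (0 : ℝ) < b := by linarith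
  have hb1 : (0 : ℝ) < b - 1 := by linarith
  have eL : ((m : ℝ) + 2) * (1 / b) * ((b - 1) / b) ^ (m + 1)
      = ((m : ℝ) + 2) * (b - 1) ^ (m + 1) / b ^ (m + 2) := by
    rw [div_pow]; field_simp; ring
  have eR : ((m : ℝ) + 1) * (1 / (b - 1)) * ((b - 2) / (b - 1)) ^ m
      = ((m : ℝ) + 1) * (b - 2) ^ m / (b - 1) ^ (m + 1) := by
    rw [div_pow, mul_assoc, div_mul_div_comm, one_mul, ← pow_succ', mul_div_assoc]
  rw [eL, eR, div_le_div_iff₀ (by positivity) (by positivity)]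
  have f1 : ((m : ℝ) + 1) * (b - 2) ^ m * b ^ (m + 2) = ((m : ℝ) + 1) * b ^ 2 * (b * (b - 2)) ^ m := by
    rw [mul_pow, pow_add]; ring
  have f2 : ((m : ℝ) + 2) * (b - 1) ^ (m + 1) * (b - 1) ^ (m + 1)
      = ((m : ℝ) + 2) * ((b - 1) ^ 2) ^ (m + 1) := by
    rw [mul_assoc, ← pow_add, ← pow_mul]
    have h : m + 1 + (m + 1) = 2 * (m + 1) := by ring
    rw [h]
  rw [f1, f2]
  exact key

/-- Define `P j = (N-j)·(1/(B-j))·(1-1/(B-j))^(N-j-1)`.  If `B ≥ N + √N` or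
`B ≤ N - √N`, then `P j ≥ P (j+1)` for all `0 ≤ j ≤ min{B,N} - 2`. -/
theorem P_monotone (N B : ℕ) (hN : 0 < N) (hB : 0 < B)
    (hyp : (B : ℝ) ≥ N + Real.sqrt N ∨ (B : ℝ) ≤ N - Real.sqrt N)
    (j : ℕ) (hj : j + 2 ≤ min B N) :
    ((N : ℝ) - j) * (1 / ((B : ℝ) - j)) * (1 - 1 / ((B : ℝ) - j)) ^ (N - j - 1) ≥
      ((N : ℝ) - (j + 1)) * (1 / ((B : ℝ) - (j + 1))) *
        (1 - 1 / ((B : ℝ) - (j + 1))) ^ (N - (j + 1) - 1) := by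
  have hjB : j + 2 ≤ B := le_trans hj (min_le_left _ _)
  have hjN : j + 2 ≤ N := le_trans hj (min_le_right _ _)
  set m : ℕ := N - j - 2 with hm
  have e1 : N - j - 1 = m + 1 := by omega
  have e2 : N - (j + 1) - 1 = m := by omega
  have hNm : N = m + j + 2 := by omega
  have hNj : (N : ℝ) - j = (m : ℝ) + 2 := by rw [hNm]; push_cast; ring
  have hNj1 : (N : ℝ) - (j + 1) = (m : ℝ) + 1 := by rw [hNm]; push_cast; ring
  set b : ℝ := (B : ℝ) - j with hbdef
  have hb2 : 2 ≤ b := by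
    have : (j : ℝ) + 2 ≤ B := by exact_mod_cast hjB
    simp only [hbdef]; linarith
  have hB1 : (B : ℝ) - (j + 1) = b - 1 := by simp only [hbdef]; ring
  -- (B - N)^2 ≥ N
  have hsq : (Real.sqrt N) ^ 2 = (N : ℝ) := Real.sq_sqrt (by positivity)
  have hsn : 0 ≤ Real.sqrt N := Real.sqrt_nonneg _
  have hdn : (N : ℝ) ≤ ((B : ℝ) - N) ^ 2 := by
    rcases hyp with h | h
    · nlinarith
    · nlinarith
  have hBN : b - ((m : ℝ) + 2) = (B : ℝ) - N := by
    simp only [hbdef]; rw [hNm]; push_cast; ring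
  have hd : ((m : ℝ) + 2) ≤ (b - ((m : ℝ) + 2)) ^ 2 := by
    rw [hBN]
    have hNle : ((m : ℝ) + 2) ≤ (N : ℝ) := by rw [hNm]; push_cast; linarith [Nat.cast_nonneg (α := ℝ) j]
    linarith
  have hbpos : (0 : ℝ) < b := by linarith
  have hb1pos : (0 : ℝ) < b - 1 := by linarith
  have h1b : 1 - 1 / b = (b - 1) / b := by field_simp
  have h2b : 1 - 1 / (b - 1) = (b - 2) / (b - 1) := by field_simp; ring
  rw [e1, e2, hNj, hNj1, hB1, h1b, h2b]
  exact reduce_aux m b hb2 hd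
end

section
/- Drop N balls uniformly and independently at random into B bins, and let I_j be the indicator that bin j contains exactly one ball. If B ≥ N + √N or B ≤ N - √N, then for every subset S of {1,...,B}, Pr[∧_{j∈S} I_j = 1] ≤ ∏_{j∈S} Pr[I_j = 1]. -/
/-!
Making `t` prescribed bins singletons amounts to an injective placement of `t` balls while the
other `N - t` balls avoid those bins, so there are `N⁽ᵗ⁾ (B - t)^(N - t)` such assignments.
When `(B - N)² ≥ N` the ratios `ρ t` of consecutive counts are nonincreasing in `t`; with
`c = B - t - 1` and `n = N - t - 2` this is the inequality
`(n + 1)(c - 1)ⁿ(c + 1)ⁿ⁺² ≤ (n + 2)c²ⁿ⁺²`. Hence `Pr[all bins of S are singletons]` equals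
`∏_{t < |S|} ρ t ≤ (ρ 0)^|S|`, and `ρ 0` is the probability that one given bin is a singleton.
-/

open Finset

def singletonCount (N B t : ℕ) : ℕ := N.descFactorial t * (B - t) ^ (N - t)

section Counting

variable {α β : Type*} [Fintype β] [DecidableEq α] [DecidableEq β]

def fiberChoices (S : Finset β) (g : S ↪ α) (i : α) : Finset β :=
  if h : i ∈ Set.range g then {(g.invOfMemRange ⟨i, h⟩ : β)} else Sᶜ

variable {S : Finset β} {g : S ↪ α}

lemma fiberChoices_apply_self (j : S) : fiberChoices S g (g j) = {(j : β)} := by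
  simp [fiberChoices]

lemma fiberChoices_of_notMem_range {i : α} (hi : i ∉ Set.range g) : fiberChoices S g i = Sᶜ :=
  dif_neg hi

lemma mem_piFinset_fiberChoices_iff [Fintype α] {f : α → β} :
    f ∈ Fintype.piFinset (fiberChoices S g) ↔
      ∀ j (hj : j ∈ S), univ.filter (fun i => f i = j) = {g ⟨j, hj⟩} := by
  rw [Fintype.mem_piFinset]
  constructor
  · intro hf j hj
    ext i
    simp only [mem_filter, mem_univ, true_and, mem_singleton]
    by_cases hi : i ∈ Set.range g
    · obtain ⟨j', rfl⟩ := hi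
      have := hf (g j')
      rw [fiberChoices_apply_self, mem_singleton] at this
      rw [this, g.injective.eq_iff, Subtype.ext_iff]
    · have := hf i
      rw [fiberChoices_of_notMem_range hi, mem_compl] at this
      exact iff_of_false (by rintro rfl; exact this hj) (by rintro rfl; exact hi ⟨_, rfl⟩)
  · intro hfib i
    by_cases hi : i ∈ Set.range g
    · obtain ⟨j, rfl⟩ := hi
      have : g j ∈ univ.filter (fun i => f i = j) := by rw [hfib j j.2]; exact mem_singleton_self _
      rw [fiberChoices_apply_self, mem_singleton]
      exact (mem_filter.1 this).2
    · rw [fiberChoices_of_notMem_range hi, mem_compl]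
      intro hfi
      have : i ∈ univ.filter (fun i' => f i' = f i) := by simp
      rw [hfib _ hfi, mem_singleton] at this
      exact hi ⟨_, this.symm⟩

lemma card_piFinset_fiberChoices [Fintype α] :
    #(Fintype.piFinset (fiberChoices S g)) = (Fintype.card β - #S) ^ (Fintype.card α - #S) := by
  have hcard : ∀ i, #(fiberChoices S g i) = if i ∈ Set.range g then 1 else Fintype.card β - #S := by
    intro i
    split_ifs with hi
    · obtain ⟨j, rfl⟩ := hi
      rw [fiberChoices_apply_self, card_singleton]
    · rw [fiberChoices_of_notMem_range hi, card_compl]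
  have hrange : #(univ.filter (fun i => i ∈ Set.range g)) = #S := by
    rw [← Fintype.card_coe S, ← Fintype.card_range g, Fintype.card_subtype]
  rw [Fintype.card_piFinset, prod_congr rfl (fun i _ => hcard i), prod_ite, prod_const_one,
    one_mul, prod_const, ← hrange, ← card_compl, compl_filter]

lemma card_filter_forall_card_fiber_eq_one [Fintype α] (S : Finset β) :
    #(univ.filter (fun f : α → β => ∀ j ∈ S, #(univ.filter (fun i => f i = j)) = 1)) =
      singletonCount (Fintype.card α) (Fintype.card β) #S := by
  have hunion : univ.filter (fun f : α → β => ∀ j ∈ S, #(univ.filter (fun i => f i = j)) = 1) =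
      (univ : Finset (S ↪ α)).biUnion (fun g => Fintype.piFinset (fiberChoices S g)) := by
    ext f
    simp only [mem_filter, mem_univ, true_and, mem_biUnion, mem_piFinset_fiberChoices_iff]
    constructor
    · intro hf
      choose a ha using fun j : S => card_eq_one.1 (hf j j.2)
      have hfa : ∀ j : S, f (a j) = j := fun j => by
        simpa using (ha j).ge (mem_singleton_self (a j))
      refine ⟨⟨a, fun j j' h => Subtype.ext ?_⟩, fun j hj => ha ⟨j, hj⟩⟩
      rw [← hfa j, ← hfa j', h]
    · intro ⟨g, hg⟩ j hj
      rw [hg j hj, card_singleton]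
  have hdisj : ((univ : Finset (S ↪ α)) : Set (S ↪ α)).PairwiseDisjoint
      (fun g => Fintype.piFinset (fiberChoices S g)) := by
    intro g _ g' _ hne
    refine disjoint_left.2 fun f hf hf' => hne ?_
    rw [mem_piFinset_fiberChoices_iff] at hf hf'
    ext j
    exact singleton_injective ((hf j j.2).symm.trans (hf' j j.2))
  rw [hunion, card_biUnion hdisj]
  simp only [card_piFinset_fiberChoices, sum_const, card_univ, Fintype.card_embedding_eq,
    Fintype.card_coe, smul_eq_mul, singletonCount]

end Counting

lemma sub_one_pow_mul_add_le_pow {y : ℝ} (hy : 1 ≤ y) (n : ℕ) :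
    (y - 1) ^ n * (y + n) ≤ y ^ (n + 1) := by
  induction n with
  | zero => simp
  | succ n ih =>
    have hpow : 0 ≤ (y - 1) ^ n := pow_nonneg (by linarith) n
    calc (y - 1) ^ (n + 1) * (y + ↑(n + 1)) = (y - 1) ^ n * (y * (y + n) - (n + 1)) := by
          push_cast; ring
      _ ≤ (y - 1) ^ n * (y * (y + n)) := by gcongr; linarith
      _ = y * ((y - 1) ^ n * (y + n)) := by ring
      _ ≤ y * y ^ (n + 1) := by gcongr
      _ = y ^ (n + 1 + 1) := by ring

lemma succ_mul_sub_one_pow_mul_add_one_pow_le {c : ℝ} (hc : 1 ≤ c) (n : ℕ)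
    (h : n + 2 ≤ (c - (n + 1)) ^ 2) :
    (n + 1) * (c - 1) ^ n * (c + 1) ^ (n + 2) ≤ (n + 2) * c ^ (2 * n + 2) := by
  have hpow : 0 ≤ (c ^ 2 - 1) ^ n := pow_nonneg (by nlinarith) n
  -- `h` is this quadratic inequality rearranged; it is where `(B - N)² ≥ N` enters.
  have hquad : (n + 1) * (c + 1) ^ 2 ≤ (n + 2) * (c ^ 2 + n) := by linarith
  calc (n + 1) * (c - 1) ^ n * (c + 1) ^ (n + 2) = (n + 1) * (c + 1) ^ 2 * (c ^ 2 - 1) ^ n := by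
        rw [show c ^ 2 - 1 = (c - 1) * (c + 1) by ring, mul_pow]; ring
    _ ≤ (n + 2) * ((c ^ 2 - 1) ^ n * (c ^ 2 + n)) := by nlinarith
    _ ≤ (n + 2) * (c ^ 2) ^ (n + 1) := by
        gcongr; exact sub_one_pow_mul_add_le_pow (by nlinarith) n
    _ = (n + 2) * c ^ (2 * n + 2) := by ring

section Ratio

noncomputable def singletonRatio (N B t : ℕ) : ℝ :=
  (N - t : ℕ) * ((B - (t + 1) : ℕ) : ℝ) ^ (N - (t + 1)) / ((B - t : ℕ) : ℝ) ^ (N - t)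

variable {N B : ℕ}

lemma singletonRatio_nonneg (t : ℕ) : 0 ≤ singletonRatio N B t := by
  unfold singletonRatio; positivity

lemma singletonCount_succ {t : ℕ} (ht : t < B) :
    (singletonCount N B (t + 1) : ℝ) = singletonRatio N B t * singletonCount N B t := by
  have hpos : ((B - t : ℕ) : ℝ) ^ (N - t) ≠ 0 :=
    pow_ne_zero _ (by exact_mod_cast (by omega : B - t ≠ 0))
  simp only [singletonCount, singletonRatio, Nat.descFactorial_succ, Nat.cast_mul, Nat.cast_pow]
  field_simp

lemma singletonCount_eq_pow_mul_prod {k : ℕ} (hk : k ≤ B) :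
    (singletonCount N B k : ℝ) = (B : ℝ) ^ N * ∏ t ∈ range k, singletonRatio N B t := by
  induction k with
  | zero => simp [singletonCount]
  | succ k ih => rw [singletonCount_succ hk, ih (by omega), prod_range_succ]; ring

lemma singletonRatio_succ_le (hgap : (N : ℝ) ≤ ((B : ℝ) - N) ^ 2) (t : ℕ) :
    singletonRatio N B (t + 1) ≤ singletonRatio N B t := by
  -- Beyond the support the ratio is `0`, possibly as a junk value `x / 0`.
  by_cases hsupp : t + 2 ≤ N ∧ t + 2 ≤ B
  swap
  · suffices singletonRatio N B (t + 1) = 0 by rw [this]; exact singletonRatio_nonneg t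
    rcases le_or_gt N (t + 1) with hN | hN
    · simp [singletonRatio, Nat.sub_eq_zero_of_le hN]
    · simp [singletonRatio, Nat.sub_eq_zero_of_le (by omega : B ≤ t + 1), Nat.sub_ne_zero_of_lt hN]
  obtain ⟨n, rfl⟩ : ∃ n, N = t + 2 + n := ⟨N - (t + 2), by omega⟩
  obtain ⟨b, rfl⟩ : ∃ b, B = t + 2 + b := ⟨B - (t + 2), by omega⟩
  have key := succ_mul_sub_one_pow_mul_add_one_pow_le (c := b + 1) (by simp) n (by
    push_cast at hgap
    nlinarith)
  simp only [singletonRatio, show t + 2 + n - (t + 1 + 1) = n by omega,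
    show t + 2 + n - (t + 1) = n + 1 by omega, show t + 2 + n - t = n + 2 by omega,
    show t + 2 + b - (t + 1 + 1) = b by omega, show t + 2 + b - (t + 1) = b + 1 by omega,
    show t + 2 + b - t = b + 2 by omega]
  rw [div_le_div_iff₀ (by positivity) (by positivity)]
  push_cast
  calc (n + 1 : ℝ) * b ^ n * (b + 2) ^ (n + 2)
        = (n + 1) * (b + 1 - 1) ^ n * (b + 1 + 1) ^ (n + 2) := by ring
    _ ≤ (n + 2) * (b + 1) ^ (2 * n + 2) := key
    _ = (n + 2) * (b + 1) ^ (n + 1) * (b + 1) ^ (n + 1) := by ring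

lemma singletonCount_div_le_pow (hgap : (N : ℝ) ≤ ((B : ℝ) - N) ^ 2) {k : ℕ} (hk : k ≤ B) :
    (singletonCount N B k : ℝ) / B ^ N ≤ ((singletonCount N B 1 : ℝ) / B ^ N) ^ k := by
  rcases k.eq_zero_or_pos with rfl | hk0
  · simpa [singletonCount] using div_self_le_one _
  have hBN : (B : ℝ) ^ N ≠ 0 := pow_ne_zero _ (by exact_mod_cast (by omega : B ≠ 0))
  have hfirst : (singletonCount N B 1 : ℝ) / B ^ N = singletonRatio N B 0 := by
    rw [singletonCount_eq_pow_mul_prod (by omega), prod_range_one, mul_div_cancel_left₀ _ hBN]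
  rw [singletonCount_eq_pow_mul_prod hk, mul_div_cancel_left₀ _ hBN, hfirst]
  have hanti := antitone_nat_of_succ_le (singletonRatio_succ_le hgap)
  calc ∏ t ∈ range k, singletonRatio N B t ≤ ∏ _t ∈ range k, singletonRatio N B 0 :=
        prod_le_prod (fun t _ => singletonRatio_nonneg t) fun t _ => hanti (Nat.zero_le t)
    _ = singletonRatio N B 0 ^ k := by rw [prod_const, card_range]

end Ratio

/-- Drop `N` balls uniformly and independently at random into `B` bins (uniform
counting measure on `Fin N → Fin B`) and let `I j` indicate that bin `j` contains
exactly one ball.  If `B ≥ N + √N` or `B ≤ N - √N`, then for every subset `S` of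
the bins, `Pr[∧_{j∈S} I_j = 1] ≤ ∏_{j∈S} Pr[I_j = 1]`. -/
theorem singletons_negatively_correlated (N B : ℕ)
    (hyp : (B : ℝ) ≥ N + Real.sqrt N ∨ (B : ℝ) ≤ N - Real.sqrt N)
    (S : Finset (Fin B)) :
    ((Finset.univ.filter (fun f : Fin N → Fin B =>
        ∀ j ∈ S, (Finset.univ.filter (fun i : Fin N => f i = j)).card = 1)).card : ℝ) /
        B ^ N ≤
      ∏ j ∈ S,
        ((Finset.univ.filter (fun f : Fin N → Fin B =>
          (Finset.univ.filter (fun i : Fin N => f i = j)).card = 1)).card : ℝ) / B ^ N := by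
  have hgap : (N : ℝ) ≤ ((B : ℝ) - N) ^ 2 := by
    rcases hyp with h | h <;>
      nlinarith [Real.sq_sqrt (Nat.cast_nonneg (α := ℝ) N), Real.sqrt_nonneg (N : ℝ)]
  have hsingle (j : Fin B) : #(univ.filter fun f : Fin N → Fin B =>
      #(univ.filter fun i => f i = j) = 1) = singletonCount N B 1 := by
    simpa using card_filter_forall_card_fiber_eq_one (α := Fin N) {j}
  have hcount : #(univ.filter fun f : Fin N → Fin B =>
      ∀ j ∈ S, #(univ.filter fun i => f i = j) = 1) = singletonCount N B #S := by
    -- `convert`, not `rw`: the statement decides `∀ j : Fin B` by `Nat.decidableForallFin`.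
    convert card_filter_forall_card_fiber_eq_one (α := Fin N) S <;> simp
  rw [hcount, prod_congr rfl fun j _ => by rw [hsingle j], prod_const]
  exact singletonCount_div_le_pow hgap (by simpa using card_le_univ S)
end

section
/- Let X_1,...,X_n be indicator (0/1-valued) random variables such that for every subset S ⊆ {1,...,n}, Pr[∧_{i∈S} X_i = 1] ≤ ∏_{i∈S} Pr[X_i = 1]. Then for every real λ ≥ 0, E[∏_{i=1}^n e^{λ X_i}] ≤ ∏_{i=1}^n E[e^{λ X_i}]. -/
/-! For `x ∈ {0, 1}` we have `e^{λx} = 1 + c x` with `c = e^λ - 1 ≥ 0`. Expanding `∏ᵢ (1 + c Xᵢ)`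
over subsets `S` writes the two sides as `∑_S c^{|S|} E[∏_{i ∈ S} Xᵢ]` and
`∑_S c^{|S|} ∏_{i ∈ S} E[Xᵢ]`; since `E[∏_{i ∈ S} Xᵢ] = Pr[∀ i ∈ S, Xᵢ = 1]` and `E[Xᵢ] = Pr[Xᵢ = 1]`,
the hypothesis compares them term by term. -/

open MeasureTheory Finset

section

variable {Ω ι : Type*}

theorem prod_eq_indicator_of_zero_or_one {X : ι → Ω → ℝ} (hX : ∀ i ω, X i ω = 0 ∨ X i ω = 1)
    (t : Finset ι) (ω : Ω) :
    ∏ i ∈ t, X i ω = {ω | ∀ i ∈ t, X i ω = 1}.indicator 1 ω := by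
  by_cases h : ω ∈ {ω | ∀ i ∈ t, X i ω = 1}
  · rw [Set.indicator_of_mem h, prod_eq_one h, Pi.one_apply]
  · rw [Set.indicator_of_notMem h]
    simp only [Set.mem_ofPred_eq, not_forall] at h
    obtain ⟨i, hi, hne⟩ := h
    exact prod_eq_zero hi ((hX i ω).resolve_right hne)

variable [MeasurableSpace Ω] {μ : Measure Ω}

theorem integral_prod_one_add_mul_le_of_integral_prod_le {Y : ι → Ω → ℝ} {s : Finset ι}
    {c : ℝ} (hc : 0 ≤ c) (hint : ∀ t ⊆ s, Integrable (fun ω ↦ ∏ i ∈ t, Y i ω) μ)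
    (hcorr : ∀ t ⊆ s, ∫ ω, ∏ i ∈ t, Y i ω ∂μ ≤ ∏ i ∈ t, ∫ ω, Y i ω ∂μ) :
    ∫ ω, ∏ i ∈ s, (1 + c * Y i ω) ∂μ ≤ ∏ i ∈ s, (1 + c * ∫ ω, Y i ω ∂μ) := by
  simp only [prod_one_add, prod_mul_distrib, prod_const]
  rw [integral_finsetSum _ fun t ht ↦ (hint t (mem_powerset.1 ht)).const_mul _]
  refine sum_le_sum fun t ht ↦ ?_
  rw [integral_const_mul]
  exact mul_le_mul_of_nonneg_left (hcorr t (mem_powerset.1 ht)) (pow_nonneg hc _)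

theorem measurableSet_forall_eq_one {X : ι → Ω → ℝ} (hmeas : ∀ i, Measurable (X i))
    (t : Finset ι) : MeasurableSet {ω | ∀ i ∈ t, X i ω = 1} := by
  simp only [Set.ofPred_forall]
  exact .biInter t.countable_toSet fun i _ ↦ hmeas i (measurableSet_singleton 1)

theorem integrable_prod_of_zero_or_one [IsFiniteMeasure μ] {X : ι → Ω → ℝ}
    (hmeas : ∀ i, Measurable (X i)) (hX : ∀ i ω, X i ω = 0 ∨ X i ω = 1) (t : Finset ι) :
    Integrable (fun ω ↦ ∏ i ∈ t, X i ω) μ := by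
  simp only [prod_eq_indicator_of_zero_or_one hX]
  exact (integrable_const 1).indicator (measurableSet_forall_eq_one hmeas t)

theorem integral_prod_of_zero_or_one {X : ι → Ω → ℝ} (hmeas : ∀ i, Measurable (X i))
    (hX : ∀ i ω, X i ω = 0 ∨ X i ω = 1) (t : Finset ι) :
    ∫ ω, ∏ i ∈ t, X i ω ∂μ = μ.real {ω | ∀ i ∈ t, X i ω = 1} := by
  simp only [prod_eq_indicator_of_zero_or_one hX]
  exact integral_indicator_one (measurableSet_forall_eq_one hmeas t)

theorem integral_of_zero_or_one {X : Ω → ℝ} (hmeas : Measurable X)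
    (hX : ∀ ω, X ω = 0 ∨ X ω = 1) : ∫ ω, X ω ∂μ = μ.real {ω | X ω = 1} := by
  simpa using integral_prod_of_zero_or_one (μ := μ) (X := fun _ : Unit ↦ X) (fun _ ↦ hmeas)
    (fun _ ↦ hX) {()}

theorem exp_mul_eq_one_add_of_zero_or_one {x : ℝ} (hx : x = 0 ∨ x = 1) (l : ℝ) :
    Real.exp (l * x) = 1 + (Real.exp l - 1) * x := by
  rcases hx with rfl | rfl <;> simp

theorem measureReal_le_prod_of_le_prod [IsFiniteMeasure μ] {A : Set Ω} {B : ι → Set Ω}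
    {t : Finset ι} (h : μ A ≤ ∏ i ∈ t, μ (B i)) : μ.real A ≤ ∏ i ∈ t, μ.real (B i) := by
  simp only [measureReal_def, ← ENNReal.toReal_prod]
  exact ENNReal.toReal_mono (ENNReal.prod_ne_top fun i _ ↦ measure_ne_top μ (B i)) h

end

/-- If indicator random variables `X₁,…,Xₙ` satisfy the subset negative-correlation
property, then for every `λ ≥ 0`,
`E[∏ i, e^{λ Xᵢ}] ≤ ∏ i, E[e^{λ Xᵢ}]`. -/
theorem mgf_domination {Ω : Type*} [MeasurableSpace Ω] (μ : Measure Ω)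
    [IsProbabilityMeasure μ] (n : ℕ) (X : Fin n → Ω → ℝ)
    (hmeas : ∀ i, Measurable (X i))
    (hind : ∀ i ω, X i ω = 0 ∨ X i ω = 1)
    (hneg : ∀ S : Finset (Fin n),
      μ {ω | ∀ i ∈ S, X i ω = 1} ≤ ∏ i ∈ S, μ {ω | X i ω = 1})
    (l : ℝ) (hl : 0 ≤ l) :
    ∫ ω, ∏ i, Real.exp (l * X i ω) ∂μ ≤ ∏ i, ∫ ω, Real.exp (l * X i ω) ∂μ := by
  have hcorr (t : Finset (Fin n)) :
      ∫ ω, ∏ i ∈ t, X i ω ∂μ ≤ ∏ i ∈ t, ∫ ω, X i ω ∂μ := by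
    simp only [integral_prod_of_zero_or_one hmeas hind,
      integral_of_zero_or_one (hmeas _) (hind _)]
    exact measureReal_le_prod_of_le_prod (hneg t)
  have hexp (i : Fin n) (ω : Ω) := exp_mul_eq_one_add_of_zero_or_one (hind i ω) l
  have hint (i : Fin n) : Integrable (X i) μ := by
    simpa using integrable_prod_of_zero_or_one (μ := μ) hmeas hind {i}
  simp only [hexp, integral_add (integrable_const 1) ((hint _).const_mul _), integral_const,
    probReal_univ, one_smul, integral_const_mul]
  exact integral_prod_one_add_mul_le_of_integral_prod_le (sub_nonneg.2 (Real.one_le_exp hl))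
    (fun t _ ↦ integrable_prod_of_zero_or_one hmeas hind t) (fun t _ ↦ hcorr t)
end

section
/- Let n be sufficiently large and suppose 0 ≤ m ≤ n balls are dropped uniformly at random into w ≥ n + √n bins. If m ≥ n^{7/10}, then with probability at least 1 - 1/n², the number of balls not landing alone in a bin (non-singleton balls) is less than (5/4)·m²/n. -/
/-!
A ball that is not alone in its bin shares it with another, so the non-singleton balls number at
most twice the collisions `m - #(image f)`. Throwing one more ball into a configuration of `k`
balls adds a collision with probability at most `k / w`, whence
`E[(6/5) ^ collisions] ≤ ∏_{i<m} (1 + i / (5w)) ≤ exp (m² / (10w))`. Markov's inequality at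
level `(5/8) m² / n` bounds the failure probability by `exp (-m² / (240 n)) ≤ exp (-n^{2/5} / 240)`,
which is below `1 / n²` for large `n`.
-/

open Finset Filter Real

theorem two_mul_sum_range_cast_le (m : ℕ) : 2 * ∑ i ∈ range m, (i : ℝ) ≤ (m : ℝ) ^ 2 := by
  have h : (∑ i ∈ range m, i) * 2 ≤ m ^ 2 := by
    rw [sum_range_id_mul_two, sq]
    exact Nat.mul_le_mul_left m (Nat.sub_le m 1)
  have h' : ((∑ i ∈ range m, i : ℕ) : ℝ) * 2 ≤ ((m ^ 2 : ℕ) : ℝ) := by exact_mod_cast h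
  push_cast at h'
  linarith

theorem prod_range_add_mul_le_pow_mul_exp {x a : ℝ} (hx : 0 < x) (ha : 0 ≤ a) (m : ℕ) :
    ∏ i ∈ range m, (x + a * i) ≤ x ^ m * exp (a * m ^ 2 / (2 * x)) := by
  calc ∏ i ∈ range m, (x + a * i)
      ≤ ∏ i ∈ range m, x * exp (a / x * i) := by
        refine prod_le_prod (fun i _ => by positivity) fun i _ => ?_
        calc x + a * i = x * (a / x * i + 1) := by field_simp; ring
          _ ≤ x * exp (a / x * i) := by gcongr; exact add_one_le_exp _
    _ = x ^ m * exp (a / x * ∑ i ∈ range m, (i : ℝ)) := by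
        rw [prod_mul_distrib, prod_const, card_range, mul_sum, exp_sum]
    _ ≤ x ^ m * exp (a * m ^ 2 / (2 * x)) := by
        gcongr
        have := two_mul_sum_range_cast_le m
        rw [div_mul_eq_mul_div, div_le_div_iff₀ hx (by positivity)]
        nlinarith [mul_le_mul_of_nonneg_left this (mul_nonneg ha hx.le)]

theorem exp_div_six_le_six_div_five_pow (k : ℕ) : exp (k / 6) ≤ (6 / 5 : ℝ) ^ k := by
  have hlog : 1 / 6 ≤ log (6 / 5) := by
    have := one_sub_inv_le_log_of_pos (x := 6 / 5) (by norm_num)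
    norm_num at this ⊢
    linarith
  calc exp (k / 6) = exp (1 / 6) ^ k := by rw [← exp_nat_mul]; ring_nf
    _ ≤ exp (log (6 / 5)) ^ k := by gcongr
    _ = (6 / 5) ^ k := by rw [exp_log (by norm_num)]

section Collisions

variable {α β : Type*} [Fintype α] [DecidableEq β]

def nonsingletonCount (f : α → β) : ℕ := #{i | 1 < #{j | f j = f i}}

def collisionCount (f : α → β) : ℕ := Fintype.card α - #(univ.image f)

theorem nonsingletonCount_eq_sum_image (f : α → β) :
    nonsingletonCount f =
      ∑ b ∈ univ.image f, if 1 < #{j | f j = b} then #{j | f j = b} else 0 := by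
  rw [nonsingletonCount, card_eq_sum_card_fiberwise (f := f) (t := univ.image f)
    (fun a _ => by simp)]
  refine sum_congr rfl fun b _ => ?_
  rw [filter_filter]
  split_ifs with h
  · congr 1
    ext a
    simp only [mem_filter, mem_univ, true_and]
    exact ⟨And.right, fun ha => ⟨by rwa [ha], ha⟩⟩
  · refine card_eq_zero.2 (filter_eq_empty_iff.2 fun a _ ha => h ?_)
    rw [← ha.2]
    exact ha.1

theorem nonsingletonCount_le_two_mul_collisionCount (f : α → β) :
    nonsingletonCount f ≤ 2 * collisionCount f := by
  have hload : ∀ b ∈ univ.image f, 1 ≤ #{j | f j = b} := by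
    intro b hb
    obtain ⟨a, -, rfl⟩ := mem_image.1 hb
    exact one_le_card.2 ⟨a, by simp⟩
  have : nonsingletonCount f + 2 * #(univ.image f) ≤ 2 * Fintype.card α := by
    rw [nonsingletonCount_eq_sum_image, ← card_univ, card_eq_sum_card_image f univ,
      card_eq_sum_ones, mul_sum, mul_sum, ← sum_add_distrib]
    refine sum_le_sum fun b hb => ?_
    have := hload b hb
    split_ifs <;> omega
  rw [collisionCount]
  omega

end Collisions

section BallsInBins

variable {β : Type*} [DecidableEq β]

theorem image_univ_cons {k : ℕ} (x : β) (g : Fin k → β) :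
    univ.image (Fin.cons x g : Fin (k + 1) → β) = insert x (univ.image g) := by
  apply coe_injective
  push_cast [coe_image, coe_univ, Set.image_univ]
  exact Fin.range_cons x g

theorem collisionCount_cons {k : ℕ} (x : β) (g : Fin k → β) :
    collisionCount (Fin.cons x g : Fin (k + 1) → β) =
      collisionCount g + if x ∈ univ.image g then 1 else 0 := by
  have h : #(univ.image g) ≤ k := card_image_le.trans (card_fin k).le
  simp only [collisionCount, image_univ_cons, card_insert_eq_ite, Fintype.card_fin]
  split_ifs <;> omega

variable [Fintype β]

theorem sum_pow_collisionCount_le {c : ℝ} (hc : 1 ≤ c) (m : ℕ) :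
    ∑ f : Fin m → β, c ^ collisionCount f ≤
      ∏ i ∈ range m, (Fintype.card β + (c - 1) * i) := by
  induction m with
  | zero => simp [collisionCount]
  | succ k ih =>
    have step : ∀ g : Fin k → β, ∑ x, c ^ collisionCount (Fin.cons x g : Fin (k + 1) → β) ≤
        c ^ collisionCount g * (Fintype.card β + (c - 1) * k) := by
      intro g
      have h : ∀ x, c ^ collisionCount (Fin.cons x g : Fin (k + 1) → β) =
          c ^ collisionCount g * (1 + (c - 1) * if x ∈ univ.image g then 1 else 0) := by
        intro x
        rw [collisionCount_cons]
        split_ifs <;> ring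
      have hS : #(univ.image g) ≤ k := card_image_le.trans (card_fin k).le
      simp only [h, ← mul_sum, sum_add_distrib, sum_boole, sum_const, card_univ, filter_univ_mem,
        nsmul_one]
      gcongr
    calc ∑ f : Fin (k + 1) → β, c ^ collisionCount f
        = ∑ g : Fin k → β, ∑ x, c ^ collisionCount (Fin.cons x g : Fin (k + 1) → β) := by
          rw [← (Fin.consEquiv fun _ => β).sum_comp, Fintype.sum_prod_type, sum_comm]
          rfl
      _ ≤ ∑ g : Fin k → β, c ^ collisionCount g * (Fintype.card β + (c - 1) * k) :=
          sum_le_sum fun g _ => step g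
      _ ≤ ∏ i ∈ range (k + 1), (Fintype.card β + (c - 1) * i) := by
          rw [← sum_mul, prod_range_succ]
          gcongr

theorem card_le_nonsingletonCount_mul_exp_le (hβ : 0 < Fintype.card β) (m : ℕ) (t : ℝ) :
    #{f : Fin m → β | t ≤ nonsingletonCount f} * exp (t / 12) ≤
      Fintype.card β ^ m * exp (m ^ 2 / (10 * Fintype.card β)) := by
  have hbad : ∀ f ∈ ({f : Fin m → β | t ≤ nonsingletonCount f} : Finset _),
      exp (t / 12) ≤ (6 / 5 : ℝ) ^ collisionCount f := by
    intro f hf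
    have ht : t ≤ 2 * collisionCount f := (mem_filter.1 hf).2.trans
      (by exact_mod_cast nonsingletonCount_le_two_mul_collisionCount f)
    exact (exp_le_exp.2 (by linarith)).trans (exp_div_six_le_six_div_five_pow _)
  calc _ ≤ ∑ f ∈ {f : Fin m → β | t ≤ nonsingletonCount f}, (6 / 5 : ℝ) ^ collisionCount f := by
        simpa using card_nsmul_le_sum _ _ _ hbad
    _ ≤ ∑ f : Fin m → β, (6 / 5 : ℝ) ^ collisionCount f :=
        sum_le_sum_of_subset_of_nonneg (subset_univ _) fun _ _ _ => by positivity
    _ ≤ ∏ i ∈ range m, ((Fintype.card β : ℝ) + (6 / 5 - 1) * i) :=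
        sum_pow_collisionCount_le (by norm_num) m
    _ ≤ (Fintype.card β : ℝ) ^ m * exp ((6 / 5 - 1) * m ^ 2 / (2 * Fintype.card β)) :=
        prod_range_add_mul_le_pow_mul_exp (by positivity) (by norm_num) m
    _ = Fintype.card β ^ m * exp (m ^ 2 / (10 * Fintype.card β)) := by ring_nf

end BallsInBins

theorem card_many_nonsingletons_le {n m w : ℕ} (hn : 0 < n) (hnw : n ≤ w) :
    #{f : Fin m → Fin w | 5 / 4 * (m : ℝ) ^ 2 / n ≤ nonsingletonCount f} ≤
      (w : ℝ) ^ m * exp (-((m : ℝ) ^ 2 / n) / 240) := by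
  have hw : 0 < Fintype.card (Fin w) := by simp; omega
  have h := card_le_nonsingletonCount_mul_exp_le hw m (5 / 4 * (m : ℝ) ^ 2 / n)
  simp only [Fintype.card_fin] at h
  have hnw' : (m : ℝ) ^ 2 / (10 * w) ≤ (m : ℝ) ^ 2 / (10 * n) := by gcongr
  rw [← le_div_iff₀ (exp_pos _)] at h
  refine h.trans ?_
  rw [mul_div_assoc, ← exp_sub]
  gcongr
  linarith [show (m : ℝ) ^ 2 / (10 * n) - 5 / 4 * m ^ 2 / n / 12 = -(m ^ 2 / n) / 240 by ring]

theorem eventually_exp_neg_rpow_le_inv_sq :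
    ∀ᶠ n : ℕ in atTop, exp (-(n : ℝ) ^ (2 / 5 : ℝ) / 240) ≤ 1 / (n : ℝ) ^ 2 := by
  have hlog := ((isLittleO_log_rpow_atTop (r := 2 / 5) (by norm_num)).bound
    (c := 1 / 480) (by norm_num)).and (eventually_gt_atTop 0)
  filter_upwards [tendsto_natCast_atTop_atTop.eventually hlog] with n ⟨hle, hpos⟩
  rw [norm_of_nonneg (log_natCast_nonneg n), norm_of_nonneg (by positivity)] at hle
  rw [one_div, ← exp_log (by positivity : (0 : ℝ) < n ^ 2), ← exp_neg, log_pow]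
  gcongr
  push_cast
  linarith

theorem rpow_two_fifths_le_sq_div {n m : ℝ} (hn : 0 < n) (hm : n ^ (7 / 10 : ℝ) ≤ m) :
    n ^ (2 / 5 : ℝ) ≤ m ^ 2 / n := by
  rw [le_div_iff₀ hn]
  calc n ^ (2 / 5 : ℝ) * n = (n ^ (7 / 10 : ℝ)) ^ 2 := by
        rw [← rpow_natCast, ← rpow_mul hn.le, ← rpow_add_one hn.ne']
        norm_num
    _ ≤ m ^ 2 := by gcongr

theorem one_sub_le_card_filter_div_card {ι : Type*} [Fintype ι] (hι : 0 < Fintype.card ι)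
    (p : ι → Prop) [DecidablePred p] {ε : ℝ} (h : (#{x | ¬p x} : ℝ) ≤ Fintype.card ι * ε) :
    1 - ε ≤ #{x | p x} / Fintype.card ι := by
  have hsplit : (#{x | p x} : ℝ) + #{x | ¬p x} = Fintype.card ι := by
    exact_mod_cast card_filter_add_card_filter_not p
  rw [le_div_iff₀ (by exact_mod_cast hι)]
  linarith

/-- For sufficiently large `n`: drop `m ≤ n` balls uniformly at random into
`w ≥ n + √n` bins.  If `m ≥ n^{7/10}`, then with probability at least `1 - 1/n²`
the number of balls not landing alone in a bin is less than `(5/4)·m²/n`. -/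
theorem remaining_packets_case1 :
    ∃ n₀ : ℕ, ∀ n : ℕ, n₀ ≤ n → ∀ m w : ℕ, m ≤ n →
      (n : ℝ) + Real.sqrt n ≤ w →
      (n : ℝ) ^ ((7 : ℝ) / 10) ≤ m →
      ((Finset.univ.filter (fun f : Fin m → Fin w =>
          ((Finset.univ.filter (fun i : Fin m =>
            1 < (Finset.univ.filter (fun i' : Fin m => f i' = f i)).card)).card : ℝ) <
            5 / 4 * (m : ℝ) ^ 2 / n)).card : ℝ) / w ^ m ≥
        1 - 1 / (n : ℝ) ^ 2 := by
  obtain ⟨n₀, hn₀⟩ := eventually_atTop.1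
    (eventually_exp_neg_rpow_le_inv_sq.and (eventually_gt_atTop 0))
  refine ⟨n₀, fun n hn m w _ hw hm => ?_⟩
  obtain ⟨hsmall, hnpos⟩ := hn₀ n hn
  have hnw : n ≤ w := by
    exact_mod_cast (le_add_of_nonneg_right (sqrt_nonneg _)).trans hw
  have hwpos : 0 < w := hnpos.trans_le hnw
  have hcard : Fintype.card (Fin m → Fin w) = w ^ m := by simp
  have hfail : (#{f : Fin m → Fin w | ¬(nonsingletonCount f : ℝ) < 5 / 4 * (m : ℝ) ^ 2 / n} : ℝ) ≤
      Fintype.card (Fin m → Fin w) * (1 / n ^ 2) := by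
    simp only [not_lt, hcard, Nat.cast_pow]
    refine (card_many_nonsingletons_le hnpos hnw).trans ?_
    gcongr
    refine (exp_le_exp.2 ?_).trans hsmall
    have := rpow_two_fifths_le_sq_div (by exact_mod_cast hnpos) hm
    linarith
  have := one_sub_le_card_filter_div_card (by rw [hcard]; positivity) _ hfail
  rwa [hcard, Nat.cast_pow] at this
end

section
/- Fix n sufficiently large, and consider a sequence m_0 ≥ m_1 ≥ m_2 ≥ ... with m_0 ≤ n, where m_{i+1} ≤ (5/4)·m_i²/n whenever m_i ≥ n^{7/10}, and additionally m_1 ≤ 0.64·m_0. Then for every i ≥ 0 with m_i ≥ n^{7/10} throughout, m_{i+1} ≤ (4/5)·m_0/2^{2^i·lg(5/4)}. -/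
/-- Deterministic recursive core of the induction for monotone backoff: for
sufficiently large `n`, if `m₀ ≥ m₁ ≥ …`, `m₀ ≤ n`, `m₁ ≤ 0.64·m₀`, and
`m_{i+1} ≤ (5/4)·m_i²/n` whenever `m_i ≥ n^{7/10}`, then for every `i` with
`m_k ≥ n^{7/10}` for all `k ≤ i`, we have `m_{i+1} ≤ (4/5)·m₀/2^{2^i·lg(5/4)}`. -/
theorem induction_monotone :
    ∃ n₀ : ℕ, ∀ n : ℕ, n₀ ≤ n → ∀ m : ℕ → ℝ,
      (∀ i, m (i + 1) ≤ m i) →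
      m 0 ≤ n →
      m 1 ≤ 0.64 * m 0 →
      (∀ i, (n : ℝ) ^ ((7 : ℝ) / 10) ≤ m i → m (i + 1) ≤ 5 / 4 * (m i) ^ 2 / n) →
      ∀ i : ℕ, (∀ k ≤ i, (n : ℝ) ^ ((7 : ℝ) / 10) ≤ m k) →
        m (i + 1) ≤ 4 / 5 * m 0 / (2 : ℝ) ^ ((2 : ℝ) ^ i * Real.logb 2 (5 / 4)) := by
  refine ⟨1, ?_⟩
  intro n hn m hmono h0 h1 hrec
  have hn1 : (1 : ℝ) ≤ n := by exact_mod_cast hn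
  have hnpos : (0 : ℝ) < n := by linarith
  have key : ∀ i : ℕ, (∀ k ≤ i, (n : ℝ) ^ ((7 : ℝ) / 10) ≤ m k) →
      m (i + 1) ≤ 4 / 5 * m 0 / ((5 / 4 : ℝ)) ^ (2 ^ i) := by
    intro i
    induction i with
    | zero =>
      intro _
      have h64 : (0.64 : ℝ) = 16 / 25 := by norm_num
      rw [h64] at h1
      norm_num
      linarith
    | succ i ih =>
      intro hk
      have hIH : m (i + 1) ≤ 4 / 5 * m 0 / (5 / 4 : ℝ) ^ (2 ^ i) :=
        ih (fun k hki => hk k (le_trans hki (Nat.le_succ i)))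
      have hmi1 : (n : ℝ) ^ ((7 : ℝ) / 10) ≤ m (i + 1) := hk (i + 1) le_rfl
      have hm1nn : (0 : ℝ) ≤ m (i + 1) :=
        le_trans (Real.rpow_nonneg (le_of_lt hnpos) _) hmi1
      have hm0nn : (0 : ℝ) ≤ m 0 :=
        le_trans (Real.rpow_nonneg (le_of_lt hnpos) _) (hk 0 (Nat.zero_le _))
      have hstep := hrec (i + 1) hmi1
      set P : ℝ := (5 / 4 : ℝ) ^ (2 ^ i) with hP
      have hPpos : 0 < P := by positivity
      have hsq : m (i + 1) ^ 2 ≤ (4 / 5 * m 0 / P) ^ 2 :=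
        pow_le_pow_left₀ hm1nn hIH 2
      have h2 : m (i + 1 + 1) ≤ 5 / 4 * (4 / 5 * m 0 / P) ^ 2 / n := by
        calc m (i + 1 + 1) ≤ 5 / 4 * m (i + 1) ^ 2 / n := hstep
          _ ≤ 5 / 4 * (4 / 5 * m 0 / P) ^ 2 / n := by
              apply div_le_div_of_nonneg_right _ hnpos.le
              nlinarith
      have hpow : (5 / 4 : ℝ) ^ (2 ^ (i + 1)) = P ^ 2 := by
        rw [hP, ← pow_mul, ← pow_succ]
      rw [hpow]
      have h3 : 5 / 4 * (4 / 5 * m 0 / P) ^ 2 / n ≤ 4 / 5 * m 0 / P ^ 2 := by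
        rw [div_le_div_iff₀ hnpos (by positivity : (0 : ℝ) < P ^ 2)]
        have : 5 / 4 * (4 / 5 * m 0 / P) ^ 2 * P ^ 2 = 4 / 5 * m 0 ^ 2 := by
          field_simp
        rw [this]
        nlinarith
      linarith
  intro i hk
  have hexp : (2 : ℝ) ^ ((2 : ℝ) ^ i * Real.logb 2 (5 / 4)) = (5 / 4 : ℝ) ^ (2 ^ i) := by
    rw [mul_comm, Real.rpow_mul (by norm_num : (0:ℝ) ≤ 2),
      Real.rpow_logb (by norm_num) (by norm_num) (by norm_num),
      show ((2 : ℝ) ^ i) = ((2 ^ i : ℕ) : ℝ) by push_cast; ring,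
      Real.rpow_natCast]
  rw [hexp]
  exact key i hk
end

section
/- Fix n sufficiently large and consider a sequence with m_0 ≤ n, m_1 ≤ 0.64·m_0, and m_{i+1} ≤ (5/4)·m_i²/w_i where w_i ≥ 4n/2^i, for all i with m_i ≥ n^{7/10}. Then m_{i+1} ≤ (4/5)·m_0/(2^i·2^{2^i·lg(5/4)}) for all such i. -/
/-!
Since `2^(2^i·lg(5/4)) = (5/4)^(2^i)`, the claim is `m (i+1) ≤ B i` with
`B i = a / (2^i q^(2^i))`, `q = 5/4`, `a = (4/5)·m₀`; the base case is `m₁ ≤ 0.64·m₀ = B 0`.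
Squaring `B i` and dividing by the window `w_{i+1} ≥ 4n/2^(i+1)` gives exactly
`(q a / n) · B (i+1) = (m₀ / n) · B (i+1)`, so `m₀ ≤ n` closes the induction.
-/

open Real

namespace Sawtooth

noncomputable def bound (q a : ℝ) (i : ℕ) : ℝ := a / (2 ^ i * q ^ 2 ^ i)

lemma bound_zero (q a : ℝ) : bound q a 0 = a / q := by
  simp [bound]

lemma bound_sq_div_window {q a n : ℝ} (hq : 0 < q) (hn : 0 < n) (i : ℕ) :
    q * bound q a i ^ 2 / (4 * n / 2 ^ (i + 1)) = q * a / n * bound q a (i + 1) := by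
  simp only [bound]
  field_simp
  ring

lemma le_bound_succ {q a n x y w : ℝ} {i : ℕ} (hq : 0 < q) (hn : 0 < n) (ha : q * a ≤ n)
    (hw : 4 * n / 2 ^ (i + 1) ≤ w) (hx₀ : 0 ≤ x) (hx : x ≤ bound q a i)
    (hy : y ≤ q * x ^ 2 / w) : y ≤ bound q a (i + 1) := by
  have hB : 0 ≤ bound q a i := hx₀.trans hx
  have ha₀ : 0 ≤ a := by
    have hD : 0 < 2 ^ i * q ^ 2 ^ i := by positivity
    simpa only [bound, div_mul_cancel₀ _ hD.ne'] using mul_nonneg hB hD.le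
  have hB' : 0 ≤ bound q a (i + 1) := by unfold bound; positivity
  calc y ≤ q * x ^ 2 / w := hy
    _ ≤ q * bound q a i ^ 2 / (4 * n / 2 ^ (i + 1)) := by gcongr
    _ = q * a / n * bound q a (i + 1) := bound_sq_div_window hq hn i
    _ ≤ bound q a (i + 1) := by
        refine mul_le_of_le_one_left hB' ?_
        rwa [div_le_one hn]

theorem le_bound {q a n t : ℝ} {m w : ℕ → ℝ} (hq : 0 < q) (hn : 0 < n) (ha : q * a ≤ n)
    (ht : 0 ≤ t) (hw : ∀ i, 4 * n / 2 ^ i ≤ w i) (hm₁ : m 1 ≤ a / q)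
    (hrec : ∀ i, t ≤ m i → m (i + 1) ≤ q * m i ^ 2 / w i) :
    ∀ i : ℕ, (∀ k ≤ i, t ≤ m k) → m (i + 1) ≤ bound q a i := by
  intro i
  induction i with
  | zero => exact fun _ => (bound_zero q a).symm ▸ hm₁
  | succ i ih =>
    intro h
    have hti : t ≤ m (i + 1) := h (i + 1) le_rfl
    exact le_bound_succ hq hn ha (hw (i + 1)) (ht.trans hti)
      (ih fun k hk => h k (hk.trans i.le_succ)) (hrec (i + 1) hti)

end Sawtooth

lemma rpow_mul_logb_of_pos {b x : ℝ} (hb : 0 < b) (hb₁ : b ≠ 1) (hx : 0 < x) (y : ℝ) :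
    b ^ (y * logb b x) = x ^ y := by
  rw [mul_comm, rpow_mul hb.le, rpow_logb hb hb₁ hx]

/-- Deterministic recursive core of the induction for Sawtooth Backoff, where
window sizes satisfy `w_i ≥ 4n/2^i`: for sufficiently large `n`, if `m₀ ≤ n`,
`m₁ ≤ 0.64·m₀`, and `m_{i+1} ≤ (5/4)·m_i²/w_i` whenever `m_i ≥ n^{7/10}`, then for
every `i` with `m_k ≥ n^{7/10}` for all `k ≤ i`,
`m_{i+1} ≤ (4/5)·m₀/(2^i·2^{2^i·lg(5/4)})`. -/
theorem induction_sawtooth :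
    ∃ n₀ : ℕ, ∀ n : ℕ, n₀ ≤ n → ∀ m w : ℕ → ℝ,
      (∀ i, 4 * (n : ℝ) / 2 ^ i ≤ w i) →
      m 0 ≤ n →
      m 1 ≤ 0.64 * m 0 →
      (∀ i, (n : ℝ) ^ ((7 : ℝ) / 10) ≤ m i → m (i + 1) ≤ 5 / 4 * (m i) ^ 2 / w i) →
      ∀ i : ℕ, (∀ k ≤ i, (n : ℝ) ^ ((7 : ℝ) / 10) ≤ m k) →
        m (i + 1) ≤
          4 / 5 * m 0 / ((2 : ℝ) ^ i * (2 : ℝ) ^ ((2 : ℝ) ^ i * Real.logb 2 (5 / 4))) := by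
  refine ⟨1, fun n hn m w hw hm₀ hm₁ hrec i hi => ?_⟩
  have hn₀ : (0 : ℝ) < n := by exact_mod_cast hn
  have hpow : ((5 : ℝ) / 4) ^ ((2 : ℝ) ^ i) = (5 / 4) ^ 2 ^ i := by
    exact_mod_cast rpow_natCast (5 / 4 : ℝ) (2 ^ i)
  rw [rpow_mul_logb_of_pos two_pos (by norm_num) (by norm_num), hpow]
  refine Sawtooth.le_bound (by norm_num) hn₀ (by linarith) (by positivity) hw ?_ hrec i hi
  linarith
end
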